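/- Let E be a directed graph, V ⊆ E⁰, H the saturated closure of V, and I the Γ-order-ideal of the talented monoid M_E^Γ generated by {[v] : v ∈ V}. Then H = {v ∈ E⁰ : [v] ∈ I} and {v ∈ B_H : [v^H] ∈ I} = ∅; that is, I = J^Γ(H, ∅). -/

import Mathlib

/-- A directed graph: vertices, edges, source and range maps. -/
structure DGraph where
  V : Type
  Ed : Type
  s : Ed → V
  r : Ed → V

namespace DGraph

variable (E : DGraph)

/-- One-step adjacency: there is an edge from `u` to `v`. -/
def Adj (u v : E.V) : Prop := ∃ e, E.s e = u ∧ E.r e = v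

/-- `u ≥ v`: there is a (finite) path from `u` to `v`. -/
def Reaches (u v : E.V) : Prop := Relation.ReflTransGen E.Adj u v

/-- The tree `T(W)` of a set of vertices. -/
def tree (W : Set E.V) : Set E.V := {u | ∃ v ∈ W, E.Reaches v u}

/-- The root `R(W)` of a set of vertices. -/
def root (W : Set E.V) : Set E.V := {u | ∃ v ∈ W, E.Reaches u v}

/-- The set of edges emitted by `v`. -/
def emits (v : E.V) : Set E.Ed := {e | E.s e = v}

/-- A sink emits no edges. -/
def IsSink (v : E.V) : Prop := E.emits v = ∅

/-- An infinite emitter emits infinitely many edges. -/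
def IsInfEmitter (v : E.V) : Prop := (E.emits v).Infinite

/-- A regular vertex is neither a sink nor an infinite emitter. -/
def IsRegular (v : E.V) : Prop := (E.emits v).Nonempty ∧ (E.emits v).Finite

/-- A hereditary set of vertices: `T(H) ⊆ H`. -/
def Hereditary (H : Set E.V) : Prop := ∀ u ∈ H, ∀ v, E.Reaches u v → v ∈ H

/-- A saturated set of vertices. -/
def Saturated (H : Set E.V) : Prop :=
  ∀ v, E.IsRegular v → (∀ e ∈ E.emits v, E.r e ∈ H) → v ∈ H

/-- The saturated closure of `W`: the smallest hereditary and saturated set containing `W`. -/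
def satClosure (W : Set E.V) : Set E.V :=
  ⋂₀ {H : Set E.V | E.Hereditary H ∧ E.Saturated H ∧ W ⊆ H}

/-- `es` is a finite walk (path) starting at `u`; `es = []` is the trivial path at `u`. -/
def IsWalkFrom (u : E.V) (es : List E.Ed) : Prop :=
  es.Chain' (fun e f => E.r e = E.s f) ∧ ∀ e ∈ es.head?, E.s e = u

/-- The terminal vertex (range) of the walk `es` starting at `u`. -/
def endVert (u : E.V) (es : List E.Ed) : E.V := es.getLast?.elim u E.r

/-- The set of vertices on the walk `es` starting at `u`. -/
def walkVerts (u : E.V) (es : List E.Ed) : Set E.V :=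
  insert u {v | ∃ e ∈ es, E.r e = v}

/-- An infinite path. -/
def IsInfPath (f : ℕ → E.Ed) : Prop := ∀ n, E.r (f n) = E.s (f (n + 1))

/-- The set of vertices on an infinite path. -/
def infVerts (f : ℕ → E.Ed) : Set E.V := Set.range fun n => E.s (f n)

/-- Elements of `E^{≤∞}`: finite walks or infinite paths. -/
inductive GPath (E : DGraph) : Type where
  | fin : E.V → List E.Ed → GPath E
  | inf : (ℕ → E.Ed) → GPath E

/-- Membership in `E^{≤∞}`: a well-formed finite path ending in a sink or an infinite
emitter, or an infinite path. -/
def gmem : GPath E → Prop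
  | .fin u es => E.IsWalkFrom u es ∧
      (E.IsSink (E.endVert u es) ∨ E.IsInfEmitter (E.endVert u es))
  | .inf f => E.IsInfPath f

/-- `p⁰`, the vertex set of an element of `E^{≤∞}`. -/
def gverts : GPath E → Set E.V
  | .fin u es => E.walkVerts u es
  | .inf f => E.infVerts f

/-- The graph `E` is cofinal. -/
def Cofinal : Prop :=
  ∀ v : E.V, ∀ p : GPath E, E.gmem p → ∃ w ∈ E.gverts p, E.Reaches v w

/-- `es` is a cycle based at `u`. -/
def IsCycle (u : E.V) (es : List E.Ed) : Prop :=
  es ≠ [] ∧ E.IsWalkFrom u es ∧ E.endVert u es = u ∧ (es.map E.s).Nodup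

/-- The cycle `es` (based at `u`) has an exit. -/
def HasExit (u : E.V) (es : List E.Ed) : Prop :=
  ∃ v ∈ E.walkVerts u es, ∃ e, E.s e = v ∧ e ∉ es

/-- An extreme cycle: a cycle with an exit such that `T(c⁰) ⊆ R(c⁰)`. -/
def IsExtremeCycle (u : E.V) (es : List E.Ed) : Prop :=
  E.IsCycle u es ∧ E.HasExit u es ∧
    E.tree (E.walkVerts u es) ⊆ E.root (E.walkVerts u es)

/-- `v` lies on some cycle. -/
def OnCycle (v : E.V) : Prop := ∃ u es, E.IsCycle u es ∧ v ∈ E.walkVerts u es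

/-- A terminal (infinite) path. -/
def IsTerminalPath (f : ℕ → E.Ed) : Prop :=
  E.IsInfPath f ∧
  (∀ v ∈ E.tree (E.infVerts f), ¬ E.IsInfEmitter v ∧ ¬ E.OnCycle v) ∧
  (∀ g : ℕ → E.Ed, E.IsInfPath g → E.s (g 0) ∈ E.infVerts f →
      E.tree (E.infVerts g) ⊆ E.root (E.infVerts g))

/-- A terminal vertex: a sink, a vertex on a cycle without exits, a vertex on an
extreme cycle, or a vertex on a terminal path. -/
def IsTerminalVert (v : E.V) : Prop :=
  E.IsSink v ∨
  (∃ u es, E.IsCycle u es ∧ ¬ E.HasExit u es ∧ v ∈ E.walkVerts u es) ∨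
  (∃ u es, E.IsExtremeCycle u es ∧ v ∈ E.walkVerts u es) ∨
  (∃ f, E.IsTerminalPath f ∧ v ∈ E.infVerts f)

/-- `p ∼ q` for elements of `E^{≤∞}`: `R(p⁰) = R(q⁰)`. -/
def pequiv (p q : GPath E) : Prop := E.root (E.gverts p) = E.root (E.gverts q)

/-- `v ≈ w` for terminal vertices. -/
def approx (v w : E.V) : Prop :=
  E.IsTerminalVert v ∧ E.IsTerminalVert w ∧
  ∃ p q : GPath E, E.gmem p ∧ E.gmem q ∧ v ∈ E.gverts p ∧ w ∈ E.gverts q ∧ E.pequiv p q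

/-- The cluster of a terminal vertex `v`: its `≈`-equivalence class. -/
def cluster (v : E.V) : Set E.V := {w | E.approx v w}

/-- `C` is a cluster of `E`. -/
def IsCluster (C : Set E.V) : Prop := ∃ v, E.IsTerminalVert v ∧ C = E.cluster v

/-- `Ter(E)`: the saturated closure of the set of terminal vertices. -/
def Ter : Set E.V := E.satClosure {v | E.IsTerminalVert v}

/-- The set `B_H` of breaking vertices of a (hereditary and saturated) set `H`. -/
def breaking (H : Set E.V) : Set E.V :=
  {v | v ∉ H ∧ E.IsInfEmitter v ∧
    {e | E.s e = v ∧ E.r e ∉ H}.Nonempty ∧ {e | E.s e = v ∧ E.r e ∉ H}.Finite}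

/-- `(H, S)` is an admissible pair. -/
def Admissible (H S : Set E.V) : Prop :=
  E.Hereditary H ∧ E.Saturated H ∧ S ⊆ E.breaking H

end DGraph
namespace DGraph

variable (E : DGraph)

/-- Generators `q^v_Z`: an infinite emitter `v` with a finite nonempty `Z ⊆ s⁻¹(v)`. -/
def QGen : Type :=
  {p : E.V × Set E.Ed // E.IsInfEmitter p.1 ∧ p.2 ⊆ E.emits p.1 ∧ p.2.Nonempty ∧ p.2.Finite}

/-- Generators of the talented monoid: vertices and elements `q^v_Z`. -/
def TalGen : Type := E.V ⊕ E.QGen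

/-- The free commutative `Γ`-monoid on the generators, `Γ = ⟨t⟩` infinite cyclic:
a basis element `(k, g)` stands for `tᵏ g`. -/
abbrev FreeTal : Type := (ℤ × E.TalGen) →₀ ℕ

/-- The element `Σ_{e ∈ F} t^{k+1}[r(e)]` of the free monoid. -/
noncomputable def tSum (k : ℤ) (F : Finset E.Ed) : E.FreeTal :=
  ∑ e ∈ F, Finsupp.single (k + 1, (Sum.inl (E.r e) : E.TalGen)) 1

/-- The defining relations of the talented monoid (at every degree `k`). -/
def TalRel : E.FreeTal → E.FreeTal → Prop := fun x y =>
  (∃ (k : ℤ) (v : E.V) (h : E.IsRegular v),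
      x = Finsupp.single (k, (Sum.inl v : E.TalGen)) 1 ∧ y = E.tSum k h.2.toFinset) ∨
  (∃ (k : ℤ) (g : E.QGen),
      x = Finsupp.single (k, (Sum.inl g.1.1 : E.TalGen)) 1 ∧
      y = (Finsupp.single (k, (Sum.inr g : E.TalGen)) 1 : E.FreeTal)
            + E.tSum k g.2.2.2.2.toFinset) ∨
  (∃ (k : ℤ) (g₁ g₂ : E.QGen),
      g₁.1.1 = g₂.1.1 ∧ g₁.1.2 ⊆ g₂.1.2 ∧ g₁.1.2 ≠ g₂.1.2 ∧
      x = Finsupp.single (k, (Sum.inr g₁ : E.TalGen)) 1 ∧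
      y = (Finsupp.single (k, (Sum.inr g₂ : E.TalGen)) 1 : E.FreeTal) +
            E.tSum k ((g₂.2.2.2.2.subset Set.diff_subset
              (t := g₂.1.2 \ g₁.1.2)).toFinset))

/-- The congruence generated by the defining relations. -/
noncomputable def talCon : AddCon E.FreeTal := addConGen E.TalRel

/-- The talented monoid `M_E^Γ`. -/
abbrev Tal : Type := E.talCon.Quotient

/-- The shift `tⁿ` on the free monoid. -/
noncomputable def shiftF (n : ℤ) : E.FreeTal →+ E.FreeTal :=
  Finsupp.mapDomain.addMonoidHom (fun p => (p.1 + n, p.2))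

theorem shiftF_single (n k : ℤ) (g : E.TalGen) (c : ℕ) :
    E.shiftF n (Finsupp.single (k, g) c) = Finsupp.single (k + n, g) c := by
  simp [shiftF, Finsupp.mapDomain.addMonoidHom_apply, Finsupp.mapDomain_single]

theorem shiftF_tSum (n k : ℤ) (F : Finset E.Ed) :
    E.shiftF n (E.tSum k F) = E.tSum (k + n) F := by
  unfold tSum
  rw [map_sum]
  refine Finset.sum_congr rfl fun e _ => ?_
  exact (E.shiftF_single n (k + 1) _ 1).trans (by rw [add_right_comm])

theorem shiftF_rel (n : ℤ) {x y : E.FreeTal} (h : E.TalRel x y) :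
    E.TalRel (E.shiftF n x) (E.shiftF n y) := by
  rcases h with ⟨k, v, hv, hx, hy⟩ | ⟨k, g, hx, hy⟩ | ⟨k, g₁, g₂, h1, h2, h3, hx, hy⟩
  · exact Or.inl ⟨k + n, v, hv, by rw [hx]; exact E.shiftF_single n k _ 1,
      by rw [hy]; exact E.shiftF_tSum n k _⟩
  · refine Or.inr (Or.inl ⟨k + n, g, by rw [hx]; exact E.shiftF_single n k _ 1, ?_⟩)
    rw [hy, map_add]
    exact congrArg₂ (· + ·) (E.shiftF_single n k _ 1) (E.shiftF_tSum n k _)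
  · refine Or.inr (Or.inr ⟨k + n, g₁, g₂, h1, h2, h3, by rw [hx]; exact E.shiftF_single n k _ 1, ?_⟩)
    rw [hy, map_add]
    exact congrArg₂ (· + ·) (E.shiftF_single n k _ 1) (E.shiftF_tSum n k _)

/-- The action of `tⁿ` on the talented monoid. -/
noncomputable def shiftT (n : ℤ) : E.Tal →+ E.Tal :=
  AddCon.lift E.talCon (E.talCon.mk'.comp (E.shiftF n)) (by
    refine AddCon.addConGen_le.mpr fun x y hxy => ?_
    have h := E.shiftF_rel n hxy
    show E.talCon.mk' (E.shiftF n x) = E.talCon.mk' (E.shiftF n y)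
    exact (AddCon.eq _).mpr (AddConGen.Rel.of _ _ h))

/-- The element `[v]` of the talented monoid. -/
noncomputable def tv (v : E.V) : E.Tal :=
  E.talCon.mk' (Finsupp.single ((0 : ℤ), (Sum.inl v : E.TalGen)) 1)

/-- The element `[q^v_Z]` of the talented monoid. -/
noncomputable def tq (g : E.QGen) : E.Tal :=
  E.talCon.mk' (Finsupp.single ((0 : ℤ), (Sum.inr g : E.TalGen)) 1)

/-- The algebraic (pre)order on the talented monoid. -/
def talLE (x y : E.Tal) : Prop := ∃ z, y = x + z

/-- A periodic element: nonzero with `tⁿ x = x` for some `n > 0`. -/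
def TPeriodic (x : E.Tal) : Prop := x ≠ 0 ∧ ∃ n : ℤ, 0 < n ∧ E.shiftT n x = x

/-- An aperiodic element: nonzero with `tⁿ x ≤ x`, `tⁿ x ≠ x` for some `n > 0`. -/
def TAperiodic (x : E.Tal) : Prop :=
  x ≠ 0 ∧ ∃ n : ℤ, 0 < n ∧ E.talLE (E.shiftT n x) x ∧ E.shiftT n x ≠ x

/-- An incomparable element: nonzero and incomparable with `tⁿ x` for every `n > 0`. -/
def TIncomparable (x : E.Tal) : Prop :=
  x ≠ 0 ∧ ∀ n : ℤ, 0 < n → ¬ E.talLE x (E.shiftT n x) ∧ ¬ E.talLE (E.shiftT n x) x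

/-- A comparable element: periodic or aperiodic. -/
def TComparable (x : E.Tal) : Prop := E.TPeriodic x ∨ E.TAperiodic x

/-- A `Γ`-order-ideal of the talented monoid. -/
def IsGOI (I : Set E.Tal) : Prop :=
  0 ∈ I ∧ (∀ x ∈ I, ∀ y ∈ I, x + y ∈ I) ∧
  (∀ n : ℤ, ∀ x ∈ I, E.shiftT n x ∈ I) ∧
  (∀ x y : E.Tal, x + y ∈ I → x ∈ I ∧ y ∈ I)

/-- The `Γ`-order-ideal generated by a set. -/
def genGOI (A : Set E.Tal) : Set E.Tal := ⋂₀ {I | E.IsGOI I ∧ A ⊆ I}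

/-- A minimal nonzero `Γ`-order-ideal. -/
def MinGOI (I : Set E.Tal) : Prop :=
  E.IsGOI I ∧ I ≠ {0} ∧ ∀ J, E.IsGOI J → J ⊆ I → J ≠ {0} → J = I

/-- The generator `q^v_Z` with `Z = s⁻¹(v) ∩ r⁻¹(E⁰ − H)`, for `v ∈ B_H`;
it represents `[v^H]`. -/
noncomputable def vhGen (H : Set E.V) (v : E.V) (h : v ∈ E.breaking H) : E.QGen :=
  ⟨(v, {e | E.s e = v ∧ E.r e ∉ H}), h.2.1, fun _ he => he.1, h.2.2.1, h.2.2.2⟩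

end DGraph

/-!
Write `I` for the ideal generated by the `[v]`, `v ∈ W`, and `H` for the saturated closure of `W`.
The set `{v | [v] ∈ I}` is hereditary and saturated, since the relations give `t[r(e)] ≤ [s(e)]`
and `[v] = Σ t[r(e)]` at a regular `v`; hence it contains `H`. Conversely, because `H` is
hereditary and saturated, each defining relation has either all or none of its generators based
in `H`, so the classes represented by elements supported over `H` form a `Γ`-order-ideal; it
contains `I` but neither `[v]` nor `[v^H]` for `v ∉ H`.
-/

theorem Finsupp.coe_support_add_subset_iff {ι : Type*} {f g : ι →₀ ℕ} {s : Set ι} :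
    ↑(f + g).support ⊆ s ↔ ↑f.support ⊆ s ∧ ↑g.support ⊆ s := by
  classical
  rw [Finsupp.support_add_eq_union, Finset.coe_union, Set.union_subset_iff]

theorem Finsupp.coe_support_single_one_subset_iff {ι : Type*} {a : ι} {s : Set ι} :
    ↑(Finsupp.single a (1 : ℕ)).support ⊆ s ↔ a ∈ s := by
  rw [Finsupp.support_single a one_ne_zero, Finset.coe_singleton,
    Set.singleton_subset_iff]

namespace DGraph

variable {E : DGraph}

section SaturatedClosure

variable {W H : Set E.V}

theorem satClosure_hereditary : E.Hereditary (E.satClosure W) :=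
  fun u hu v huv H hH => hH.1 u (hu H hH) v huv

theorem satClosure_saturated : E.Saturated (E.satClosure W) :=
  fun v hv hr H hH => hH.2.1 v hv fun e he => hr e he H hH

theorem subset_satClosure : W ⊆ E.satClosure W :=
  fun _ hv _ hH => hH.2.2 hv

theorem satClosure_subset (hH : E.Hereditary H) (hS : E.Saturated H) (hW : W ⊆ H) :
    E.satClosure W ⊆ H :=
  Set.sInter_subset_of_mem ⟨hH, hS, hW⟩

theorem Hereditary.mem_of_adj (hH : E.Hereditary H) {u v : E.V} (hu : u ∈ H)
    (h : E.Adj u v) : v ∈ H :=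
  hH u hu v (Relation.ReflTransGen.single h)

end SaturatedClosure

section GeneratedIdeal

variable {A B I : Set E.Tal}

theorem isGOI_genGOI : E.IsGOI (E.genGOI A) :=
  ⟨fun _ hI => hI.1.1,
    fun _ hx _ hy I hI => hI.1.2.1 _ (hx I hI) _ (hy I hI),
    fun n _ hx I hI => hI.1.2.2.1 n _ (hx I hI),
    fun x y hxy => ⟨fun I hI => (hI.1.2.2.2 x y (hxy I hI)).1,
      fun I hI => (hI.1.2.2.2 x y (hxy I hI)).2⟩⟩

theorem subset_genGOI : A ⊆ E.genGOI A :=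
  fun _ hx _ hI => hI.2 hx

theorem genGOI_subset (hI : E.IsGOI I) (hA : A ⊆ I) : E.genGOI A ⊆ I :=
  fun _ hx => hx I ⟨hI, hA⟩

theorem genGOI_eq_genGOI (hAB : A ⊆ B) (hB : B ⊆ E.genGOI A) : E.genGOI A = E.genGOI B :=
  (genGOI_subset isGOI_genGOI (hAB.trans subset_genGOI)).antisymm
    (genGOI_subset isGOI_genGOI hB)

end GeneratedIdeal

section Relations

theorem shiftT_mk'_single (n k : ℤ) (g : E.TalGen) :
    E.shiftT n (E.talCon.mk' (Finsupp.single (k, g) 1)) =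
      E.talCon.mk' (Finsupp.single (k + n, g) 1) :=
  congrArg E.talCon.mk' (E.shiftF_single n k g 1)

theorem shiftT_tv (n : ℤ) (v : E.V) :
    E.shiftT n (E.tv v) = E.talCon.mk' (Finsupp.single (n, (Sum.inl v : E.TalGen)) 1) :=
  (shiftT_mk'_single n 0 _).trans (by rw [zero_add])

theorem shiftT_shiftT (m n : ℤ) (x : E.Tal) : E.shiftT m (E.shiftT n x) = E.shiftT (n + m) x := by
  obtain ⟨x, rfl⟩ := AddCon.mk'_surjective x
  refine congrArg E.talCon.mk' ?_
  simp only [shiftF, Finsupp.mapDomain.addMonoidHom_apply, ← Finsupp.mapDomain_comp]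
  congr 1
  funext p
  simp [add_assoc]

theorem shiftT_zero (x : E.Tal) : E.shiftT 0 x = x := by
  obtain ⟨x, rfl⟩ := AddCon.mk'_surjective x
  refine congrArg E.talCon.mk' ?_
  simp only [shiftF, Finsupp.mapDomain.addMonoidHom_apply, add_zero]
  exact Finsupp.mapDomain_id

theorem mk'_tSum (F : Finset E.Ed) :
    E.talCon.mk' (E.tSum 0 F) = ∑ e ∈ F, E.shiftT 1 (E.tv (E.r e)) := by
  simp only [tSum, map_sum, zero_add, shiftT_tv]

theorem tv_eq_sum_of_isRegular {v : E.V} (hv : E.IsRegular v) :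
    E.tv v = ∑ e ∈ hv.2.toFinset, E.shiftT 1 (E.tv (E.r e)) := by
  rw [← mk'_tSum]
  exact (AddCon.eq _).mpr (AddConGen.Rel.of _ _ (Or.inl ⟨0, v, hv, rfl, rfl⟩))

theorem tv_eq_tq_add_sum (g : E.QGen) :
    E.tv g.1.1 = E.tq g + ∑ e ∈ g.2.2.2.2.toFinset, E.shiftT 1 (E.tv (E.r e)) := by
  rw [← mk'_tSum, tq, ← map_add]
  exact (AddCon.eq _).mpr (AddConGen.Rel.of _ _ (Or.inr (Or.inl ⟨0, g, rfl, rfl⟩)))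

theorem exists_tv_eq_shiftT_tv_add {u v : E.V} (h : E.Adj u v) :
    ∃ z, E.tv u = E.shiftT 1 (E.tv v) + z := by
  classical
  obtain ⟨e, rfl, rfl⟩ := h
  by_cases hfin : (E.emits (E.s e)).Finite
  · have hreg : E.IsRegular (E.s e) := ⟨⟨e, rfl⟩, hfin⟩
    rw [tv_eq_sum_of_isRegular hreg, ← Finset.add_sum_erase _ _ (hfin.mem_toFinset.mpr rfl)]
    exact ⟨_, rfl⟩
  · let g : E.QGen := ⟨(E.s e, {e}), hfin, Set.singleton_subset_iff.mpr rfl,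
      Set.singleton_nonempty e, Set.finite_singleton e⟩
    rw [show E.s e = g.1.1 from rfl, tv_eq_tq_add_sum, Set.Finite.toFinset_singleton,
      Finset.sum_singleton, add_comm]
    exact ⟨_, rfl⟩

end Relations

namespace IsGOI

variable {I : Set E.Tal}

theorem sum_mem (hI : E.IsGOI I) {ι : Type*} {F : Finset ι} {f : ι → E.Tal}
    (h : ∀ i ∈ F, f i ∈ I) : ∑ i ∈ F, f i ∈ I :=
  Finset.sum_induction f (· ∈ I) (fun _ _ ha hb => hI.2.1 _ ha _ hb) hI.1 h

theorem tv_mem_of_adj (hI : E.IsGOI I) {u v : E.V} (h : E.Adj u v) (hu : E.tv u ∈ I) :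
    E.tv v ∈ I := by
  obtain ⟨z, hz⟩ := exists_tv_eq_shiftT_tv_add h
  have hshift := hI.2.2.1 (-1) _ (hI.2.2.2 _ _ (hz ▸ hu)).1
  rwa [shiftT_shiftT, add_neg_cancel, shiftT_zero] at hshift

theorem hereditary_setOf_tv_mem (hI : E.IsGOI I) : E.Hereditary {v | E.tv v ∈ I} := by
  intro u hu v huv
  induction huv with
  | refl => exact hu
  | tail _ hadj ih => exact hI.tv_mem_of_adj hadj ih

theorem saturated_setOf_tv_mem (hI : E.IsGOI I) : E.Saturated {v | E.tv v ∈ I} := by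
  intro v hv hr
  rw [Set.mem_ofPred_eq, tv_eq_sum_of_isRegular hv]
  exact hI.sum_mem fun e he => hI.2.2.1 1 _ (hr e (hv.2.mem_toFinset.mp he))

end IsGOI

section SupportIdeal

def genBase : E.TalGen → E.V := Sum.elim id fun g => g.1.1

def SupportedIn (H : Set E.V) (x : E.FreeTal) : Prop :=
  ↑x.support ⊆ {p : ℤ × E.TalGen | E.genBase p.2 ∈ H}

variable {H : Set E.V}

theorem supportedIn_add {x y : E.FreeTal} :
    E.SupportedIn H (x + y) ↔ E.SupportedIn H x ∧ E.SupportedIn H y :=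
  Finsupp.coe_support_add_subset_iff

theorem supportedIn_single {p : ℤ × E.TalGen} :
    E.SupportedIn H (Finsupp.single p 1) ↔ E.genBase p.2 ∈ H :=
  Finsupp.coe_support_single_one_subset_iff

-- Stated at the type that the equations in `TalRel` elaborate to, so that `rw` finds them.
theorem supportedIn_single_inl {k : ℤ} {v : E.V} :
    E.SupportedIn H (Finsupp.single (k, Sum.inl v) 1 : ℤ × (E.V ⊕ E.QGen) →₀ ℕ) ↔ v ∈ H :=
  supportedIn_single

theorem supportedIn_single_inr {k : ℤ} {g : E.QGen} :
    E.SupportedIn H (Finsupp.single (k, Sum.inr g) 1 : ℤ × (E.V ⊕ E.QGen) →₀ ℕ) ↔ g.1.1 ∈ H :=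
  supportedIn_single

theorem supportedIn_tSum {k : ℤ} {F : Finset E.Ed} :
    E.SupportedIn H (E.tSum k F) ↔ ∀ e ∈ F, E.r e ∈ H := by
  classical
  induction F using Finset.induction_on with
  | empty => simp [tSum, SupportedIn]
  | insert e F he ih =>
    rw [Finset.forall_mem_insert, ← ih, tSum, Finset.sum_insert he, supportedIn_add,
      supportedIn_single]
    rfl

theorem supportedIn_shiftF {x : E.FreeTal} (n : ℤ) (hx : E.SupportedIn H x) :
    E.SupportedIn H (E.shiftF n x) := by
  classical
  intro p hp
  obtain ⟨q, hq, rfl⟩ := Finset.mem_image.mp (Finsupp.mapDomain_support hp)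
  exact hx (a := q) hq

theorem supportedIn_iff_of_talRel (hH : E.Hereditary H) (hS : E.Saturated H)
    {x y : E.FreeTal} (h : E.TalRel x y) : E.SupportedIn H x ↔ E.SupportedIn H y := by
  rcases h with ⟨k, v, hv, rfl, rfl⟩ | ⟨k, g, rfl, rfl⟩ | ⟨k, g₁, g₂, hbase, -, -, rfl, rfl⟩
  · rw [supportedIn_single_inl, supportedIn_tSum]
    simp only [Set.Finite.mem_toFinset]
    exact ⟨fun hvH e he => hH.mem_of_adj hvH ⟨e, he, rfl⟩, hS v hv⟩
  · rw [supportedIn_single_inl, supportedIn_add, supportedIn_single, supportedIn_tSum]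
    exact ⟨fun hvH => ⟨hvH, fun e he =>
      hH.mem_of_adj hvH ⟨e, g.2.2.1 (g.2.2.2.2.mem_toFinset.mp he), rfl⟩⟩, And.left⟩
  · rw [supportedIn_single_inr, supportedIn_add, supportedIn_single, supportedIn_tSum]
    change g₁.1.1 ∈ H ↔ g₂.1.1 ∈ H ∧ _
    rw [hbase]
    refine ⟨fun hvH => ⟨hvH, fun e he => hH.mem_of_adj hvH ⟨e, ?_, rfl⟩⟩, And.left⟩
    exact g₂.2.2.1 ((Set.Finite.mem_toFinset _).mp he).1

theorem supportedIn_iff_of_talCon (hH : E.Hereditary H) (hS : E.Saturated H)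
    {x y : E.FreeTal} (h : E.talCon x y) : E.SupportedIn H x ↔ E.SupportedIn H y :=
  let supportedCon : AddCon E.FreeTal :=
    { r := fun x y => E.SupportedIn H x ↔ E.SupportedIn H y
      iseqv := ⟨fun _ => Iff.rfl, Iff.symm, Iff.trans⟩
      add' := fun h₁ h₂ => by
        simp only [supportedIn_add]
        exact and_congr h₁ h₂ }
  (AddCon.addConGen_le (c := supportedCon)).mpr (fun _ _ => supportedIn_iff_of_talRel hH hS) h

def supportIdeal (H : Set E.V) : Set E.Tal := E.talCon.mk' '' {x | E.SupportedIn H x}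

theorem mk'_mem_supportIdeal (hH : E.Hereditary H) (hS : E.Saturated H) {x : E.FreeTal} :
    E.talCon.mk' x ∈ E.supportIdeal H ↔ E.SupportedIn H x := by
  refine ⟨?_, fun hx => ⟨x, hx, rfl⟩⟩
  rintro ⟨y, hy, hyx⟩
  exact (supportedIn_iff_of_talCon hH hS ((AddCon.eq _).mp hyx)).mp hy

theorem isGOI_supportIdeal (hH : E.Hereditary H) (hS : E.Saturated H) :
    E.IsGOI (E.supportIdeal H) := by
  have hmem := fun x => mk'_mem_supportIdeal hH hS (x := x)
  refine ⟨⟨0, by simp [SupportedIn], map_zero _⟩, ?_, ?_, ?_⟩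
  · rintro _ ⟨x, hx, rfl⟩ _ ⟨y, hy, rfl⟩
    exact ⟨x + y, supportedIn_add.mpr ⟨hx, hy⟩, map_add _ _ _⟩
  · rintro n _ ⟨x, hx, rfl⟩
    exact ⟨_, supportedIn_shiftF n hx, rfl⟩
  · intro a b hab
    obtain ⟨x, rfl⟩ := AddCon.mk'_surjective a
    obtain ⟨y, rfl⟩ := AddCon.mk'_surjective b
    rw [← map_add, hmem, supportedIn_add] at hab
    exact ⟨(hmem x).mpr hab.1, (hmem y).mpr hab.2⟩

theorem tv_mem_supportIdeal (hH : E.Hereditary H) (hS : E.Saturated H) {v : E.V} :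
    E.tv v ∈ E.supportIdeal H ↔ v ∈ H :=
  (mk'_mem_supportIdeal hH hS).trans supportedIn_single

theorem tq_mem_supportIdeal (hH : E.Hereditary H) (hS : E.Saturated H) {g : E.QGen} :
    E.tq g ∈ E.supportIdeal H ↔ g.1.1 ∈ H :=
  (mk'_mem_supportIdeal hH hS).trans supportedIn_single

end SupportIdeal

end DGraph

/-- Lemma: if `H` is the saturated closure of `W` and `I` is the
`Γ`-order-ideal of `M_E^Γ` generated by `{[v] : v ∈ W}`, then
`H = {v : [v] ∈ I}`, no `[v^H]` with `v ∈ B_H` lies in `I`, and `I = J^Γ(H, ∅)`. -/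
theorem genGOI_of_set (E : DGraph) (W : Set E.V) :
    E.satClosure W = {v | E.tv v ∈ E.genGOI {x | ∃ v ∈ W, x = E.tv v}} ∧
    (∀ v : E.V, ∀ h : v ∈ E.breaking (E.satClosure W),
      E.tq (E.vhGen (E.satClosure W) v h) ∉ E.genGOI {x | ∃ v ∈ W, x = E.tv v}) ∧
    E.genGOI {x | ∃ v ∈ W, x = E.tv v}
      = E.genGOI {x | ∃ v ∈ E.satClosure W, x = E.tv v} := by
  open DGraph in
  set I := E.genGOI {x | ∃ v ∈ W, x = E.tv v}
  have hH : E.Hereditary (E.satClosure W) := satClosure_hereditary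
  have hS : E.Saturated (E.satClosure W) := satClosure_saturated
  have hI : E.IsGOI I := isGOI_genGOI
  have hgen_supp : I ⊆ E.supportIdeal (E.satClosure W) :=
    genGOI_subset (isGOI_supportIdeal hH hS) fun _ ⟨v, hv, hx⟩ =>
      hx ▸ (tv_mem_supportIdeal hH hS).mpr (subset_satClosure hv)
  have hclosure_gen : E.satClosure W ⊆ {v | E.tv v ∈ I} :=
    satClosure_subset hI.hereditary_setOf_tv_mem hI.saturated_setOf_tv_mem
      fun v hv => subset_genGOI ⟨v, hv, rfl⟩
  refine ⟨hclosure_gen.antisymm fun v hv => (tv_mem_supportIdeal hH hS).mp (hgen_supp hv),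
    fun v hv hmem => hv.1 ((tq_mem_supportIdeal hH hS).mp (hgen_supp hmem)), ?_⟩
  exact genGOI_eq_genGOI (fun _ ⟨v, hv, hx⟩ => ⟨v, subset_satClosure hv, hx⟩)
    fun _ ⟨v, hv, hx⟩ => hx ▸ hclosure_gen hv
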